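/- arXiv:2603.17536 — 2 statements merged into one kernel-verified Lean document; each statement's English description precedes it below -/
import Mathlib

section
/- Let V : H → ℝ, C, α > 0 satisfy 0 ≤ V(y) ≤ C·‖T(y)‖² for all y ∈ H (V is positive semidefinite and PDE bounded). Let x be a trajectory of the PIE T ẋ = A x, and suppose there is d : ℝ → ℝ such that for every t ≥ 0 the function s ↦ V(x(s)) has derivative d(t) at t and d(t) ≤ −α·‖T(x(t))‖² (the derivative of V along the trajectory is PDE negative). Then for every b ≥ 0, ∫₀ᵇ ‖T(x(t))‖² dt ≤ (C/α)·‖T(x(0))‖², i.e., the trajectory satisfies the finite-energy PDE stability bound. -/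
open MeasureTheory

open Set in
theorem mul_integral_le_sub_of_hasDerivAt_le_neg_mul {W d f : ℝ → ℝ} {α a b : ℝ} (hab : a ≤ b)
    (hf : IntegrableOn f (Icc a b)) (hW : ∀ t ∈ Icc a b, HasDerivAt W (d t) t)
    (hd : ∀ t ∈ Icc a b, d t ≤ -α * f t) :
    α * ∫ t in a..b, f t ≤ W a - W b := by
  have hdiss : W b - W a ≤ ∫ t in a..b, -α * f t :=
    intervalIntegral.sub_le_integral_of_hasDeriv_right_of_le hab
      (fun t ht => (hW t ht).continuousAt.continuousWithinAt)
      (fun t ht => (hW t (Ioo_subset_Icc_self ht)).hasDerivWithinAt)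
      (hf.const_mul (-α)) (fun t ht => hd t (Ioo_subset_Icc_self ht))
  rw [intervalIntegral.integral_const_mul] at hdiss
  linarith

theorem fe_pde_stability_general
    {H : Type*} [NormedAddCommGroup H] [InnerProductSpace ℝ H]
    (T : H →L[ℝ] H) (V : H → ℝ) (C α : ℝ) (hα : 0 < α)
    (hlow : ∀ y : H, 0 ≤ V y)
    (hup : ∀ y : H, V y ≤ C * ‖T y‖ ^ 2)
    (x : ℝ → H) (hx : Differentiable ℝ x)
    (d : ℝ → ℝ)
    (hd : ∀ t : ℝ, 0 ≤ t → HasDerivAt (fun s => V (x s)) (d t) t)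
    (hdneg : ∀ t : ℝ, 0 ≤ t → d t ≤ -α * ‖T (x t)‖ ^ 2) :
    ∀ b : ℝ, 0 ≤ b →
      (∫ t in Set.Icc (0 : ℝ) b, ‖T (x t)‖ ^ 2) ≤ C / α * ‖T (x 0)‖ ^ 2 := by
  intro b hb
  have hcont : Continuous fun t => ‖T (x t)‖ ^ 2 :=
    (T.continuous.comp hx.continuous).norm.pow 2
  have hdiss := mul_integral_le_sub_of_hasDerivAt_le_neg_mul hb hcont.integrableOn_Icc
    (fun t ht => hd t ht.1) (fun t ht => hdneg t ht.1)
  rw [integral_Icc_eq_integral_Ioc, ← intervalIntegral.integral_of_le hb, div_mul_eq_mul_div,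
    le_div_iff₀ hα]
  linarith [hlow (x b), hup (x 0)]

/-- A positive semidefinite, PDE bounded Lyapunov function `V`
(`0 ≤ V y ≤ C‖T y‖²`) whose derivative along a trajectory of the PIE `T ẋ = A x`
is PDE negative (`d t ≤ -α‖T (x t)‖²`) certifies the finite-energy PDE
stability bound `∫₀ᵇ ‖T (x t)‖² dt ≤ (C/α)‖T (x 0)‖²` for every `b ≥ 0`. -/
theorem fe_pde_stability
    {H : Type*} [NormedAddCommGroup H] [InnerProductSpace ℝ H] [CompleteSpace H]
    (T A : H →L[ℝ] H) (V : H → ℝ) (C α : ℝ) (hC : 0 < C) (hα : 0 < α)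
    (hlow : ∀ y : H, 0 ≤ V y)
    (hup : ∀ y : H, V y ≤ C * ‖T y‖ ^ 2)
    (x : ℝ → H) (hx : Differentiable ℝ x)
    (hpie : ∀ t : ℝ, 0 ≤ t → T (deriv x t) = A (x t))
    (d : ℝ → ℝ)
    (hd : ∀ t : ℝ, 0 ≤ t → HasDerivAt (fun s => V (x s)) (d t) t)
    (hdneg : ∀ t : ℝ, 0 ≤ t → d t ≤ -α * ‖T (x t)‖ ^ 2) :
    ∀ b : ℝ, 0 ≤ b →
      (∫ t in Set.Icc (0 : ℝ) b, ‖T (x t)‖ ^ 2) ≤ C / α * ‖T (x 0)‖ ^ 2 :=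
  fe_pde_stability_general T V C α hα hlow hup x hx d hd hdneg
end

section
/- Let P be a continuous linear operator on H and α > 0. Suppose: (i) P is self-adjoint, i.e., ⟪P(y), z⟫ = ⟪y, P(z)⟫ for all y, z ∈ H; (ii) ⟪y, P(y)⟫ ≥ 0 for all y ∈ H; and (iii) 2·⟪T(y), P(A(y))⟫ ≤ −α·‖T(y)‖² for all y ∈ H. Then every trajectory x of the PIE T ẋ = A x satisfies, for every b ≥ 0, ∫₀ᵇ ‖T(x(t))‖² dt ≤ (1/α)·⟪T(x(0)), P(T(x(0)))⟫ ≤ (‖P‖/α)·‖T(x(0))‖²; in particular the PIE is finite-energy PDE stable. -/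
/-!
`V t = ⟪T (x t), P (T (x t))⟫` is a Lyapunov function: since `P` is symmetric and `T ẋ = A x`,
`V' = 2⟪T x, P (A x)⟫ ≤ -α‖T x‖²`. Integrating over `[0, b]` gives
`α ∫₀ᵇ ‖T x‖² ≤ V 0 - V b ≤ V 0`, as `V b ≥ 0`. The second inequality is Cauchy–Schwarz.
-/

open scoped RealInnerProductSpace

section

variable {H : Type*} [NormedAddCommGroup H] [InnerProductSpace ℝ H]

theorem HasDerivAt.inner_apply_self_of_isSymmetric {P : H →L[ℝ] H}
    (hP : (P : H →ₗ[ℝ] H).IsSymmetric) {u : ℝ → H} {u' : H} {t : ℝ} (hu : HasDerivAt u u' t) :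
    HasDerivAt (fun s => ⟪u s, P (u s)⟫) (2 * ⟪u t, P u'⟫) t := by
  refine (hu.inner ℝ (P.hasFDerivAt.comp_hasDerivAt t hu)).congr_deriv ?_
  have hsym : ⟪P u', u t⟫ = ⟪u', P (u t)⟫ := hP u' (u t)
  rw [Function.comp_apply, ← hsym, real_inner_comm (u t)]
  ring

theorem real_inner_apply_self_le_opNorm_mul_sq (P : H →L[ℝ] H) (y : H) :
    ⟪y, P y⟫ ≤ ‖P‖ * ‖y‖ ^ 2 :=
  calc ⟪y, P y⟫ ≤ ‖y‖ * ‖P y‖ := real_inner_le_norm _ _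
    _ ≤ ‖y‖ * (‖P‖ * ‖y‖) := by gcongr; exact P.le_opNorm y
    _ = ‖P‖ * ‖y‖ ^ 2 := by ring

theorem mul_integral_le_sub_of_trajectory {T A P : H →L[ℝ] H} {α : ℝ}
    (hP : (P : H →ₗ[ℝ] H).IsSymmetric)
    (hneg : ∀ y : H, 2 * ⟪T y, P (A y)⟫ ≤ -α * ‖T y‖ ^ 2)
    {x : ℝ → H} (hx : Differentiable ℝ x) (hTA : ∀ t, 0 ≤ t → T (deriv x t) = A (x t))
    {b : ℝ} (hb : 0 ≤ b) :
    α * ∫ t in (0 : ℝ)..b, ‖T (x t)‖ ^ 2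
      ≤ ⟪T (x 0), P (T (x 0))⟫ - ⟪T (x b), P (T (x b))⟫ := by
  have hV : ∀ t, HasDerivAt (fun s => -⟪T (x s), P (T (x s))⟫)
      (-(2 * ⟪T (x t), P (T (deriv x t))⟫)) t := fun t =>
    (T.hasFDerivAt.comp_hasDerivAt t (hx t).hasDerivAt).inner_apply_self_of_isSymmetric hP |>.neg
  have hcont : Continuous fun t => α * ‖T (x t)‖ ^ 2 := by
    have := hx.continuous
    fun_prop
  rw [← intervalIntegral.integral_const_mul]
  convert intervalIntegral.integral_le_sub_of_hasDeriv_right_of_le hb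
    (fun t _ => (hV t).continuousAt.continuousWithinAt) (fun t _ => (hV t).hasDerivWithinAt)
    hcont.integrableOn_Icc (fun t ht => ?_) using 1
  · ring
  · rw [hTA t ht.1.le]
    linarith [hneg (x t)]

end

theorem lpi_fe_pde_stability_general
    {H : Type*} [NormedAddCommGroup H] [InnerProductSpace ℝ H]
    (T A P : H →L[ℝ] H) (α : ℝ) (hα : 0 < α)
    (hsa : ∀ y z : H, (inner ℝ (P y) z : ℝ) = (inner ℝ y (P z) : ℝ))
    (hpos : ∀ y : H, (0 : ℝ) ≤ (inner ℝ y (P y) : ℝ))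
    (hneg : ∀ y : H, 2 * (inner ℝ (T y) (P (A y)) : ℝ) ≤ -α * ‖T y‖ ^ 2) :
    ∀ x : ℝ → H, Differentiable ℝ x →
      (∀ t : ℝ, 0 ≤ t → T (deriv x t) = A (x t)) →
      ∀ b : ℝ, 0 ≤ b →
        (∫ t in Set.Icc (0 : ℝ) b, ‖T (x t)‖ ^ 2)
            ≤ 1 / α * (inner ℝ (T (x 0)) (P (T (x 0))) : ℝ) ∧
        1 / α * (inner ℝ (T (x 0)) (P (T (x 0))) : ℝ) ≤ ‖P‖ / α * ‖T (x 0)‖ ^ 2 := by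
  intro x hx hTA b hb
  have hdiss := mul_integral_le_sub_of_trajectory hsa hneg hx hTA hb
  rw [MeasureTheory.integral_Icc_eq_integral_Ioc, ← intervalIntegral.integral_of_le hb]
  constructor
  · rw [one_div_mul_eq_div, le_div_iff₀ hα]
    linarith [hpos (T (x b))]
  · calc 1 / α * ⟪T (x 0), P (T (x 0))⟫ ≤ 1 / α * (‖P‖ * ‖T (x 0)‖ ^ 2) := by
          gcongr; exact real_inner_apply_self_le_opNorm_mul_sq P (T (x 0))
      _ = ‖P‖ / α * ‖T (x 0)‖ ^ 2 := by ring

/-- Operator-inequality condition for finite-energy PDE stability.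
If `P` is self-adjoint, positive semidefinite, and `2⟪T y, P (A y)⟫ ≤ -α‖T y‖²`,
then every trajectory of the PIE `T ẋ = A x` satisfies, for every `b ≥ 0`,
`∫₀ᵇ ‖T (x t)‖² dt ≤ (1/α)⟪T (x 0), P (T (x 0))⟫ ≤ (‖P‖/α)‖T (x 0)‖²`. -/
theorem lpi_fe_pde_stability
    {H : Type*} [NormedAddCommGroup H] [InnerProductSpace ℝ H] [CompleteSpace H]
    (T A P : H →L[ℝ] H) (α : ℝ) (hα : 0 < α)
    (hsa : ∀ y z : H, (inner ℝ (P y) z : ℝ) = (inner ℝ y (P z) : ℝ))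
    (hpos : ∀ y : H, (0 : ℝ) ≤ (inner ℝ y (P y) : ℝ))
    (hneg : ∀ y : H, 2 * (inner ℝ (T y) (P (A y)) : ℝ) ≤ -α * ‖T y‖ ^ 2) :
    ∀ x : ℝ → H, Differentiable ℝ x →
      (∀ t : ℝ, 0 ≤ t → T (deriv x t) = A (x t)) →
      ∀ b : ℝ, 0 ≤ b →
        (∫ t in Set.Icc (0 : ℝ) b, ‖T (x t)‖ ^ 2)
            ≤ 1 / α * (inner ℝ (T (x 0)) (P (T (x 0))) : ℝ) ∧
        1 / α * (inner ℝ (T (x 0)) (P (T (x 0))) : ℝ) ≤ ‖P‖ / α * ‖T (x 0)‖ ^ 2 :=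
  lpi_fe_pde_stability_general T A P α hα hsa hpos hneg
end
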